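/- Let λ₁ ≥ λ₂ ≥ ⋯ ≥ λ_n ≥ 0 be real numbers and let ℓ = ⌈√n⌉ + 1 ≤ n. Then (∑_{i=1}^{ℓ} λ_i)² ≥ ∑_{i=1}^{n} λ_i². -/

import Mathlib

/-!
Let `c = λ_ℓ`, the smallest of the first `ℓ` terms. Expanding the square, `(∑_{i ≤ ℓ} λ_i)²`
exceeds `∑_{i ≤ ℓ} λ_i²` by the `ℓ² - ℓ` off-diagonal products `λ_i λ_j ≥ c²`, while each of the
remaining `n - ℓ` squares is at most `c²`. Since `ℓ ≥ √n`, we have `n - ℓ ≤ ℓ² - ℓ`.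
-/

open Finset

namespace Finset

variable {ι R : Type*}

theorem sq_sum_eq_sum_sq_add_sum_offDiag [CommSemiring R] [DecidableEq ι] (s : Finset ι)
    (f : ι → R) :
    (∑ i ∈ s, f i) ^ 2 = ∑ i ∈ s, f i ^ 2 + ∑ x ∈ s.offDiag, f x.1 * f x.2 := by
  rw [sq, sum_mul_sum, ← sum_product', ← diag_union_offDiag,
    sum_union (disjoint_diag_offDiag s), sum_diag]
  simp only [sq]

theorem sum_sq_add_card_offDiag_mul_sq_le_sq_sum [CommSemiring R] [PartialOrder R]
    [IsOrderedRing R] (s : Finset ι) (f : ι → R) {c : R} (hc : 0 ≤ c) (hf : ∀ i ∈ s, c ≤ f i) :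
    ∑ i ∈ s, f i ^ 2 + #s.offDiag * c ^ 2 ≤ (∑ i ∈ s, f i) ^ 2 := by
  classical
  rw [sq_sum_eq_sum_sq_add_sum_offDiag, ← nsmul_eq_mul]
  gcongr
  refine card_nsmul_le_sum _ _ _ fun x hx => ?_
  obtain ⟨h₁, h₂, -⟩ := mem_offDiag.1 hx
  exact sq c ▸ mul_le_mul (hf _ h₁) (hf _ h₂) hc (hc.trans (hf _ h₁))

theorem sum_sq_le_card_mul_sq [Semiring R] [PartialOrder R] [IsOrderedRing R]
    (s : Finset ι) (f : ι → R) {c : R} (hf : ∀ i ∈ s, 0 ≤ f i ∧ f i ≤ c) :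
    ∑ i ∈ s, f i ^ 2 ≤ #s * c ^ 2 := by
  rw [← nsmul_eq_mul]
  exact sum_le_card_nsmul _ _ _ fun i hi => pow_le_pow_left₀ (hf i hi).1 (hf i hi).2 2

end Finset

theorem Nat.le_ceil_sqrt_sq (n : ℕ) : n ≤ ⌈Real.sqrt n⌉₊ ^ 2 := by
  have := (Real.sqrt_le_left (Nat.cast_nonneg _)).1 (Nat.le_ceil (Real.sqrt n))
  exact_mod_cast this

/-- For λ₁ ≥ ⋯ ≥ λ_n ≥ 0 and ℓ = ⌈√n⌉ + 1 ≤ n we have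
(∑_{i=1}^{ℓ} λ_i)² ≥ ∑_{i=1}^{n} λ_i². -/
theorem stmt4 (n : ℕ) (f : ℕ → ℝ)
    (hmono : ∀ i j : ℕ, i ≤ j → j < n → f j ≤ f i)
    (hnonneg : ∀ i : ℕ, i < n → 0 ≤ f i)
    (ℓ : ℕ) (hℓ : ℓ = ⌈Real.sqrt n⌉₊ + 1) (hle : ℓ ≤ n) :
    ∑ i ∈ Finset.range n, (f i) ^ 2 ≤ (∑ i ∈ Finset.range ℓ, f i) ^ 2 := by
  set c := f (ℓ - 1)
  have head := sum_sq_add_card_offDiag_mul_sq_le_sq_sum (range ℓ) f (hnonneg (ℓ - 1) (by omega))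
    fun i hi => hmono i _ (by have := mem_range.1 hi; omega) (by omega)
  have tail := sum_sq_le_card_mul_sq (Ico ℓ n) f (c := c) fun i hi =>
    have hi := mem_Ico.1 hi
    ⟨hnonneg i hi.2, hmono _ i (by omega) hi.2⟩
  have hcard : #(Ico ℓ n) ≤ #(range ℓ).offDiag := by
    have hn : n ≤ ℓ ^ 2 := (Nat.le_ceil_sqrt_sq n).trans (Nat.pow_le_pow_left (by omega) 2)
    rw [Nat.card_Ico, offDiag_card, card_range, ← sq]
    exact Nat.sub_le_sub_right hn ℓ
  rw [← sum_range_add_sum_Ico _ hle]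
  calc _ ≤ ∑ i ∈ range ℓ, f i ^ 2 + #(range ℓ).offDiag * c ^ 2 := by
        gcongr
        exact tail.trans (by gcongr)
    _ ≤ _ := head
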